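/- Let T be a tree with at least 2 vertices, X ⊆ V(T), and k, r ≥ 1 integers with |X| ≥ kr. Then either there is a vertex v ∈ V(T) such that at least k components of T − v contain a vertex of X, or there is an edge f ∈ E(T) such that each of the two components of T − f contains at least r vertices of X. -/

import Mathlib

open Sym2

/-- A finite multigraph: finite vertex and edge types, each edge has an
unordered pair of endpoints, and there are no loops. -/
structure Multigraph where
  V : Type
  E : Type
  finV : Finite V
  finE : Finite E
  ends : E → Sym2 V
  no_loops : ∀ e, ¬ (ends e).IsDiag

attribute [instance] Multigraph.finV Multigraph.finE

namespace Multigraph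

/-- `IsWalk G vs es`: `vs` is the vertex sequence and `es` the edge sequence of a
walk in `G`. -/
inductive IsWalk (G : Multigraph) : List G.V → List G.E → Prop
  | nil (v : G.V) : IsWalk G [v] []
  | cons {v : G.V} {vs : List G.V} {es : List G.E} (u : G.V) (e : G.E)
      (he : G.ends e = s(u, v)) (hw : IsWalk G (v :: vs) es) :
      IsWalk G (u :: v :: vs) (e :: es)

/-- A path from `a` to `b` in the multigraph `G`, given by its vertex sequence `vs`
and edge sequence `es`. -/
def IsPathBetween (G : Multigraph) (a b : G.V) (vs : List G.V) (es : List G.E) : Prop :=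
  G.IsWalk vs es ∧ vs.Nodup ∧ vs.head? = some a ∧ vs.getLast? = some b

/-- A weak immersion of `H` into `G`. -/
structure WeakImmersion (H G : Multigraph) where
  vmap : H.V → G.V
  vmap_inj : Function.Injective vmap
  pverts : H.E → List G.V
  pedges : H.E → List G.E
  is_path : ∀ f : H.E, ∃ x y : H.V, H.ends f = s(x, y) ∧
    G.IsPathBetween (vmap x) (vmap y) (pverts f) (pedges f)
  edge_disjoint : ∀ f f' : H.E, f ≠ f' → ∀ e, e ∈ pedges f → e ∉ pedges f'

/-- `G.Immerses H`: `G` admits a weak immersion of `H`. -/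
def Immerses (G H : Multigraph) : Prop := Nonempty (WeakImmersion H G)

/-- The degree of a vertex: the number of edges incident with it. -/
noncomputable def degree (G : Multigraph) (v : G.V) : ℕ :=
  Nat.card {e : G.E // v ∈ G.ends e}

/-- The edge cut `δ(U)`: edges with exactly one endpoint in `U`. -/
def edgeCut (G : Multigraph) (U : Set G.V) : Set G.E :=
  {e | ∃ a b, G.ends e = s(a, b) ∧ a ∈ U ∧ b ∉ U}

/-- There exist `k` pairwise edge-disjoint paths from `a` to `b` in `G`. -/
def EdgeDisjointPaths (G : Multigraph) (a b : G.V) (k : ℕ) : Prop :=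
  ∃ (vs : Fin k → List G.V) (es : Fin k → List G.E),
    (∀ i, G.IsPathBetween a b (vs i) (es i)) ∧
    ∀ i j, i ≠ j → ∀ e, e ∈ es i → e ∉ es j

/-- Isomorphism of multigraphs. -/
structure Iso (G H : Multigraph) where
  vmap : G.V ≃ H.V
  emap : G.E ≃ H.E
  ends_map : ∀ e, H.ends (emap e) = Sym2.map vmap (G.ends e)

/-- The complete graph `K_t` as a multigraph. -/
def completeGraph (t : ℕ) : Multigraph where
  V := Fin t
  E := {p : Sym2 (Fin t) // ¬ p.IsDiag}
  finV := inferInstance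
  finE := inferInstance
  ends := Subtype.val
  no_loops := fun e => e.prop

/-- The multigraph `S_{k,n}`: vertices `x_1, …, x_n, y` (with `y = none`) and `k`
parallel edges from each `x_i` to `y`. -/
def star (k n : ℕ) : Multigraph where
  V := Option (Fin n)
  E := Fin n × Fin k
  finV := inferInstance
  finE := inferInstance
  ends := fun p => s(some p.1, none)
  no_loops := fun p => by simp [Sym2.mk_isDiag_iff]

/-! ### Edge sums -/

/-- A witness that `G` is a `k`-edge sum of `G₁` and `G₂`. -/
structure EdgeSumWitness (k : ℕ) (G G₁ G₂ : Multigraph) where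
  v₁ : G₁.V
  v₂ : G₂.V
  deg₁ : G₁.degree v₁ = k
  deg₂ : G₂.degree v₂ = k
  π : {e : G₁.E // v₁ ∈ G₁.ends e} ≃ {e : G₂.E // v₂ ∈ G₂.ends e}
  α : G.V ≃ {x : G₁.V // x ≠ v₁} ⊕ {y : G₂.V // y ≠ v₂}
  β : G.E ≃ ({e : G₁.E // v₁ ∉ G₁.ends e} ⊕ {e : G₂.E // v₂ ∉ G₂.ends e}) ⊕
      {e : G₁.E // v₁ ∈ G₁.ends e}
  ends₁ : ∀ (e : {e : G₁.E // v₁ ∉ G₁.ends e}) (x y : G₁.V) (hx : x ≠ v₁) (hy : y ≠ v₁),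
    G₁.ends e.val = s(x, y) →
      G.ends (β.symm (Sum.inl (Sum.inl e))) = s(α.symm (Sum.inl ⟨x, hx⟩), α.symm (Sum.inl ⟨y, hy⟩))
  ends₂ : ∀ (e : {e : G₂.E // v₂ ∉ G₂.ends e}) (x y : G₂.V) (hx : x ≠ v₂) (hy : y ≠ v₂),
    G₂.ends e.val = s(x, y) →
      G.ends (β.symm (Sum.inl (Sum.inr e))) = s(α.symm (Sum.inr ⟨x, hx⟩), α.symm (Sum.inr ⟨y, hy⟩))
  ends₃ : ∀ (e : {e : G₁.E // v₁ ∈ G₁.ends e}) (x : G₁.V) (y : G₂.V) (hx : x ≠ v₁) (hy : y ≠ v₂),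
    G₁.ends e.val = s(x, v₁) → G₂.ends (π e).val = s(y, v₂) →
      G.ends (β.symm (Sum.inr e)) = s(α.symm (Sum.inl ⟨x, hx⟩), α.symm (Sum.inr ⟨y, hy⟩))

/-- `G` is a `k`-edge sum of `G₁` and `G₂`. -/
def IsEdgeSum (k : ℕ) (G G₁ G₂ : Multigraph) : Prop :=
  Nonempty (EdgeSumWitness k G G₁ G₂)

/-- The edge sum is grounded. -/
def EdgeSumWitness.Grounded {k : ℕ} {G G₁ G₂ : Multigraph}
    (w : EdgeSumWitness k G G₁ G₂) : Prop :=
  (∃ v', v' ≠ w.v₁ ∧ G₁.EdgeDisjointPaths w.v₁ v' k) ∧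
  (∃ v', v' ≠ w.v₂ ∧ G₂.EdgeDisjointPaths w.v₂ v' k)

/-- `G` is a grounded `k`-edge sum of `G₁` and `G₂`. -/
def IsGroundedEdgeSum (k : ℕ) (G G₁ G₂ : Multigraph) : Prop :=
  ∃ w : EdgeSumWitness k G G₁ G₂, w.Grounded

/-! ### Auxiliary simple-graph operations -/

/-- Delete the vertex `t` from `T` (keeping it as an isolated vertex). -/
def delAt {τ : Type} (T : SimpleGraph τ) (t : τ) : SimpleGraph τ where
  Adj a b := T.Adj a b ∧ a ≠ t ∧ b ≠ t
  symm := ⟨fun a b h => ⟨h.1.symm, h.2.2, h.2.1⟩⟩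
  loopless := ⟨fun a h => T.irrefl h.1⟩

lemma reach_delAt {τ : Type} (T : SimpleGraph τ) (t : τ) {a b : τ} (q : T.Walk a b)
    (ht : t ∉ q.support) : (delAt T t).Reachable a b := by
  induction q with
  | nil => exact SimpleGraph.Reachable.refl _
  | @cons u v w h p ih =>
      simp only [SimpleGraph.Walk.support_cons, List.mem_cons] at ht
      push_neg at ht
      have hv : v ≠ t := fun hv => ht.2 (hv ▸ p.start_mem_support)
      exact (SimpleGraph.Adj.reachable (G := delAt T t) ⟨h, Ne.symm ht.1, hv⟩).trans (ih ht.2)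

/-! ### Tree-cut decompositions -/

/-- A tree-cut decomposition of the multigraph `G`. -/
structure TreeCutDecomp (G : Multigraph) where
  T : Type
  finT : Finite T
  tree : SimpleGraph T
  isTree : tree.IsTree
  bag : T → Set G.V
  disj : ∀ s t : T, s ≠ t → Disjoint (bag s) (bag t)
  covers : ∀ v : G.V, ∃ t : T, v ∈ bag t

attribute [instance] TreeCutDecomp.finT

variable {G : Multigraph}

/-- The union of the bags on the `v`-side of the tree edge `uv`. -/
def TreeCutDecomp.sideSet (D : TreeCutDecomp G) (u v : D.T) : Set G.V :=
  {x | ∃ s, (D.tree.deleteEdges {s(u, v)}).Reachable v s ∧ x ∈ D.bag s}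

/-- The adhesion of a tree-cut decomposition. -/
noncomputable def TreeCutDecomp.adhesion (D : TreeCutDecomp G) : ℕ :=
  sSup {n | ∃ u v : D.T, D.tree.Adj u v ∧ n = (G.edgeCut (D.sideSet u v)).ncard}

lemma TreeCutDecomp.exists_periph (D : TreeCutDecomp G) (t : D.T) (v : G.V)
    (hv : v ∉ D.bag t) :
    ∃ u : D.T, D.tree.Adj t u ∧ ∃ s, v ∈ D.bag s ∧ (delAt D.tree t).Reachable s u := by
  classical
  obtain ⟨s, hs⟩ := D.covers v
  have hst : t ≠ s := fun h => hv (h ▸ hs)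
  obtain ⟨w⟩ := D.isTree.isConnected.preconnected t s
  obtain ⟨x, hadj, q, hq⟩ := SimpleGraph.Walk.exists_eq_cons_of_ne hst w.toPath.val
  have hP : (SimpleGraph.Walk.cons hadj q).IsPath := hq ▸ w.toPath.prop
  rw [SimpleGraph.Walk.cons_isPath_iff] at hP
  exact ⟨x, hadj, s, hs, (reach_delAt D.tree t q hP.2).symm⟩

open Classical in
/-- The map from `G` to the vertices of the torso at `t`. -/
noncomputable def TreeCutDecomp.proj (D : TreeCutDecomp G) (t : D.T) (v : G.V) :
    ↥(D.bag t) ⊕ {u : D.T // D.tree.Adj t u} :=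
  if hv : v ∈ D.bag t then Sum.inl ⟨v, hv⟩
  else Sum.inr ⟨(D.exists_periph t v hv).choose, (D.exists_periph t v hv).choose_spec.1⟩

/-- The torso of `G` at a node `t` of a tree-cut decomposition. -/
noncomputable def TreeCutDecomp.torso (D : TreeCutDecomp G) (t : D.T) : Multigraph where
  V := ↥(D.bag t) ⊕ {u : D.T // D.tree.Adj t u}
  E := {e : G.E // ¬ (Sym2.map (D.proj t) (G.ends e)).IsDiag}
  finV := inferInstance
  finE := inferInstance
  ends := fun e => Sym2.map (D.proj t) (G.ends e.val)
  no_loops := fun e => e.prop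

/-- The core vertices of the torso at `t`. -/
def TreeCutDecomp.torsoCore (D : TreeCutDecomp G) (t : D.T) : Set (D.torso t).V :=
  Set.range Sum.inl

/-! ### The 3-center and tree-cut width -/

/-- Condition (1): the immersion of `H` in `G` covers `X` and every vertex of `H`
of degree at most two is mapped into `X`. -/
def CenterCond (G : Multigraph) (X : Set G.V) (H : Multigraph) (I : WeakImmersion H G) : Prop :=
  X ⊆ Set.range I.vmap ∧ ∀ x : H.V, H.degree x ≤ 2 → I.vmap x ∈ X

/-- `C` is a 3-center of `(G, X)`: it admits an immersion in `G` satisfying (1) and is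
maximal with respect to immersion containment among all such graphs. -/
def IsThreeCenter (G : Multigraph) (X : Set G.V) (C : Multigraph) : Prop :=
  (∃ I : WeakImmersion C G, CenterCond G X C I) ∧
  ∀ H : Multigraph, (∃ I : WeakImmersion H G, CenterCond G X H I) → C.Immerses H

/-- The number of vertices of the 3-center of `(G, X)`. -/
noncomputable def threeCenterCard (G : Multigraph) (X : Set G.V) : ℕ :=
  sSup {n | ∃ C : Multigraph, IsThreeCenter G X C ∧ Nat.card C.V = n}

/-- The width of a tree-cut decomposition. -/
noncomputable def TreeCutDecomp.width (D : TreeCutDecomp G) : ℕ :=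
  max D.adhesion (sSup {n | ∃ t : D.T, n = threeCenterCard (D.torso t) (D.torsoCore t)})

/-- The tree-cut width of a multigraph. -/
noncomputable def tcw (G : Multigraph) : ℕ :=
  sInf {w | ∃ D : TreeCutDecomp G, D.width = w}

/-! ### Tree decompositions and tree-width -/

/-- A tree decomposition of the multigraph `G`. -/
structure TreeDecomp (G : Multigraph) where
  T : Type
  finT : Finite T
  tree : SimpleGraph T
  isTree : tree.IsTree
  bag : T → Set G.V
  covers_v : ∀ v : G.V, ∃ t : T, v ∈ bag t
  covers_e : ∀ e : G.E, ∃ (t : T) (x y : G.V), G.ends e = s(x, y) ∧ x ∈ bag t ∧ y ∈ bag t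
  connected : ∀ v : G.V, (SimpleGraph.induce {t : T | v ∈ bag t} tree).Connected

/-- The tree-width of a multigraph. -/
noncomputable def treewidth (G : Multigraph) : ℕ :=
  sInf {n | ∃ D : TreeDecomp G, ∀ t : D.T, (D.bag t).ncard ≤ n + 1}

/-! ### Walls and grids -/

def wallStep (r : ℕ) (a b : Fin r × Fin r) : Prop :=
  (a.1 = b.1 ∧ a.2.val + 1 = b.2.val) ∨
  (a.2 = b.2 ∧ a.1.val + 1 = b.1.val ∧ (a.1.val + 1) % 2 = (a.2.val + 1) % 2)

def wallAdj (r : ℕ) (a b : Fin r × Fin r) : Prop := wallStep r a b ∨ wallStep r b a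

lemma wallStep_ne {r : ℕ} {a b : Fin r × Fin r} (h : wallStep r a b) : a ≠ b := by
  rintro rfl
  rcases h with ⟨-, h⟩ | ⟨-, h, -⟩ <;> omega

/-- The `r`-wall `H_r`. -/
def wall (r : ℕ) : Multigraph where
  V := Fin r × Fin r
  E := {q : Sym2 (Fin r × Fin r) // ∃ a b, q = s(a, b) ∧ wallAdj r a b}
  finV := inferInstance
  finE := inferInstance
  ends := Subtype.val
  no_loops := by
    rintro ⟨q, a, b, rfl, hab⟩ hd
    rw [Sym2.mk_isDiag_iff] at hd
    subst hd
    rcases hab with h | h <;> exact wallStep_ne h rfl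

def gridStep (r : ℕ) (a b : Fin r × Fin r) : Prop :=
  (a.1 = b.1 ∧ a.2.val + 1 = b.2.val) ∨ (a.2 = b.2 ∧ a.1.val + 1 = b.1.val)

def gridAdj (r : ℕ) (a b : Fin r × Fin r) : Prop := gridStep r a b ∨ gridStep r b a

lemma gridStep_ne {r : ℕ} {a b : Fin r × Fin r} (h : gridStep r a b) : a ≠ b := by
  rintro rfl
  rcases h with ⟨-, h⟩ | ⟨-, h⟩ <;> omega

/-- The `r × r` grid. -/
def grid (r : ℕ) : Multigraph where
  V := Fin r × Fin r
  E := {q : Sym2 (Fin r × Fin r) // ∃ a b, q = s(a, b) ∧ gridAdj r a b}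
  finV := inferInstance
  finE := inferInstance
  ends := Subtype.val
  no_loops := by
    rintro ⟨q, a, b, rfl, hab⟩ hd
    rw [Sym2.mk_isDiag_iff] at hd
    subst hd
    rcases hab with h | h <;> exact gridStep_ne h rfl

/-! ### Subdivisions and minors -/

/-- `G` contains `H` as a subdivision: an immersion whose composite paths pairwise
meet only in common endpoints. -/
def ContainsSubdivision (G H : Multigraph) : Prop :=
  ∃ I : WeakImmersion H G, ∀ f f' : H.E, f ≠ f' → ∀ v : G.V,
    v ∈ I.pverts f → v ∈ I.pverts f' →
      ((I.pverts f).head? = some v ∨ (I.pverts f).getLast? = some v) ∧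
      ((I.pverts f').head? = some v ∨ (I.pverts f').getLast? = some v)

/-- A set of vertices is connected in `G`. -/
def ConnectedIn (G : Multigraph) (B : Set G.V) : Prop :=
  B.Nonempty ∧ ∀ a ∈ B, ∀ b ∈ B, ∃ (vs : List G.V) (es : List G.E),
    G.IsWalk vs es ∧ vs.head? = some a ∧ vs.getLast? = some b ∧ ∀ v ∈ vs, v ∈ B

/-- `G` contains `H` as a minor. -/
def HasMinor (G H : Multigraph) : Prop :=
  ∃ B : H.V → Set G.V,
    (∀ x, G.ConnectedIn (B x)) ∧
    (∀ x y, x ≠ y → Disjoint (B x) (B y)) ∧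
    ∃ η : H.E → G.E, Function.Injective η ∧
      ∀ (f : H.E) (x y : H.V), H.ends f = s(x, y) →
        ∃ a b, G.ends (η f) = s(a, b) ∧ a ∈ B x ∧ b ∈ B y

/-! ### Subgraphs, splitting off, suppression -/

/-- `A` is (isomorphic to) a subgraph of `G`. -/
def IsSubgraph (A G : Multigraph) : Prop :=
  ∃ (fv : A.V → G.V) (fe : A.E → G.E), Function.Injective fv ∧ Function.Injective fe ∧
    ∀ e, G.ends (fe e) = Sym2.map fv (A.ends e)

/-- `B` is obtained from `A` by splitting off a pair of incident edges. -/
def SplitOffRel (A B : Multigraph) : Prop :=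
  ∃ (e₁ e₂ : A.E) (x y z : A.V), e₁ ≠ e₂ ∧ x ≠ z ∧
    A.ends e₁ = s(x, y) ∧ A.ends e₂ = s(y, z) ∧
    ∃ (fV : A.V ≃ B.V) (fE : {e : A.E // e ≠ e₁ ∧ e ≠ e₂} ⊕ Unit ≃ B.E),
      (∀ e : {e : A.E // e ≠ e₁ ∧ e ≠ e₂},
        B.ends (fE (Sum.inl e)) = Sym2.map fV (A.ends e.val)) ∧
      B.ends (fE (Sum.inr ())) = s(fV x, fV z)

/-- `B` is obtained from `A` by suppressing a vertex of degree two (contracting one of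
its incident edges and deleting any resulting loops). -/
def SuppressTwoRel (A B : Multigraph) : Prop :=
  ∃ v : A.V, A.degree v = 2 ∧
    ∃ σ : A.V → B.V,
      (∀ x y, x ≠ v → y ≠ v → (σ x = σ y ↔ x = y)) ∧
      (∀ y : B.V, ∃ x, x ≠ v ∧ σ x = y) ∧
      (∃ a, a ≠ v ∧ (∃ e, A.ends e = s(v, a)) ∧ σ v = σ a) ∧
      ∃ τ : {e : A.E // ¬ (Sym2.map σ (A.ends e)).IsDiag} ≃ B.E,
        ∀ e, B.ends (τ e) = Sym2.map σ (A.ends e.val)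

/-- A multigraph together with a marked set of vertices. -/
structure MarkedGraph where
  G : Multigraph
  X : Set G.V

/-- One step of suppressing a vertex outside the marked set of degree at most two
(for degree zero this deletes the vertex). -/
def SuppressStep (A B : MarkedGraph) : Prop :=
  ∃ v : A.G.V, v ∉ A.X ∧ A.G.degree v ≤ 2 ∧
    ∃ σ : A.G.V → B.G.V,
      (∀ x y, x ≠ v → y ≠ v → (σ x = σ y ↔ x = y)) ∧
      (∀ y : B.G.V, ∃ x, x ≠ v ∧ σ x = y) ∧
      B.X = {y | ∃ x, x ∈ A.X ∧ σ x = y} ∧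
      (1 ≤ A.G.degree v → ∃ a, a ≠ v ∧ (∃ e, A.G.ends e = s(v, a)) ∧ σ v = σ a) ∧
      ∃ τ : {e : A.G.E // ¬ (Sym2.map σ (A.G.ends e)).IsDiag} ≃ B.G.E,
        ∀ e, B.G.ends (τ e) = Sym2.map σ (A.G.ends e.val)

/-! ### Trees and cycles as multigraphs -/

/-- A multigraph is a tree if it corresponds to a simple tree on its vertex set. -/
def IsTreeGraph (G : Multigraph) : Prop :=
  ∃ S : SimpleGraph G.V, S.IsTree ∧ ∃ φ : G.E ≃ S.edgeSet, ∀ e, (φ e : Sym2 G.V) = G.ends e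

/-- The cycle on `n + 3` vertices. -/
def cycleGraph (n : ℕ) : Multigraph where
  V := Fin (n + 3)
  E := Fin (n + 3)
  finV := inferInstance
  finE := inferInstance
  ends := fun i => s(i, i + 1)
  no_loops := by
    intro i hd
    rw [Sym2.mk_isDiag_iff] at hd
    have h1 : (i : Fin (n + 3)) + 0 = i + 1 := by simpa using hd
    have h01 : (0 : Fin (n + 3)) = 1 := add_left_cancel h1
    have := congrArg Fin.val h01
    simp [Fin.val_one] at this

/-- A matching in a multigraph: a set of pairwise vertex-disjoint edges. -/
def IsMatching (G : Multigraph) (M : Set G.E) : Prop :=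
  ∀ e ∈ M, ∀ e' ∈ M, e ≠ e' → ∀ v : G.V, v ∈ G.ends e → v ∉ G.ends e'

end Multigraph

/-!
Suppose no edge has at least `r` vertices of `X` on each side. Orient the edge `uv` towards `v`
when the `v`-side contains at least `r` vertices of `X`; no edge is then oriented both ways, so
some vertex `v` of the tree has no outgoing edge. Every component of `T - v` is the far side of
an edge at `v` and therefore holds at most `r - 1` vertices of `X`, while `X - v` has at least
`kr - 1` vertices; for `k ≥ 2` this forces at least `k` components. For `k = 1` it suffices to
delete any vertex other than some vertex of `X`.
-/

theorem Set.ncard_le_mul_ncard_image {α β : Type*} {f : α → β} {s : Set α} (hs : s.Finite)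
    (n : ℕ) (hn : ∀ b ∈ f '' s, (s ∩ f ⁻¹' {b}).ncard ≤ n) :
    s.ncard ≤ n * (f '' s).ncard := by
  classical
  lift s to Finset α using hs
  rw [← Finset.coe_image, Set.ncard_coe_finset, Set.ncard_coe_finset]
  refine Finset.card_le_mul_card_image s n fun b hb => ?_
  rw [← Set.ncard_coe_finset, Finset.coe_filter]
  exact hn b (by simpa using hb)

namespace SimpleGraph

open Multigraph

variable {V : Type} {G : SimpleGraph V} {u v z : V}

def edgeSide (G : SimpleGraph V) (u v : V) : Set V :=
  {w | (G.deleteEdges {s(u, v)}).Reachable v w}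

theorem delAt_le_deleteEdges (G : SimpleGraph V) (u v : V) :
    delAt G u ≤ G.deleteEdges {s(u, v)} := by
  rintro a b ⟨hab, ha, hb⟩
  refine deleteEdges_adj.2 ⟨hab, fun he => ?_⟩
  rcases Sym2.mem_iff.1 ((Set.mem_singleton_iff.1 he).symm ▸ Sym2.mem_mk_left u v) with h | h
  exacts [ha h.symm, hb h.symm]

theorem IsAcyclic.edgeSide_eq (hG : G.IsAcyclic) (h : G.Adj u v) :
    G.edgeSide u v = {w | (delAt G u).Reachable v w} := by
  classical
  ext w
  refine ⟨fun ⟨p⟩ => ?_, fun hw => hw.mono (delAt_le_deleteEdges G u v)⟩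
  by_cases hu : u ∈ p.support
  · exact absurd ⟨(p.takeUntil u hu).reverse⟩ (isAcyclic_iff_forall_adj_isBridge.1 hG h)
  · exact reach_delAt G u (p.mapLe (deleteEdges_le _)) (by rwa [Walk.support_mapLe_eq_support])

theorem IsAcyclic.edgeSide_ssubset (hG : G.IsAcyclic) (huv : G.Adj u v) (hvz : G.Adj v z)
    (hzu : z ≠ u) : G.edgeSide v z ⊂ G.edgeSide u v := by
  refine ⟨fun w hw => ?_, fun hsub => ?_⟩
  · have hvz' : (G.deleteEdges {s(u, v)}).Adj v z := by
      refine deleteEdges_adj.2 ⟨hvz, fun he => ?_⟩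
      rcases Sym2.eq_iff.1 (Set.mem_singleton_iff.1 he) with ⟨h, -⟩ | ⟨-, h⟩
      exacts [huv.ne h.symm, hzu h]
    rw [hG.edgeSide_eq hvz] at hw
    exact hvz'.reachable.trans (hw.mono (Sym2.eq_swap ▸ delAt_le_deleteEdges G v u))
  · have hv : v ∈ G.edgeSide v z := hsub (Reachable.refl v)
    exact isAcyclic_iff_forall_adj_isBridge.1 hG hvz hv.symm

theorem edgeSide_swap (G : SimpleGraph V) (u v : V) :
    G.edgeSide v u = {w | (G.deleteEdges {s(u, v)}).Reachable u w} := by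
  rw [edgeSide, Sym2.eq_swap]

theorem IsAcyclic.exists_sink [Finite V] [Nonempty V] (hG : G.IsAcyclic) (P : V → V → Prop)
    (hP : ∀ u v, G.Adj u v → P u v → ¬ P v u) : ∃ v, ∀ z, G.Adj v z → ¬ P v z := by
  by_cases hD : {d : V × V | G.Adj d.1 d.2 ∧ P d.1 d.2}.Nonempty
  · -- The head of an oriented edge with the smallest head side is a sink: any edge leaving it
    -- other than the way back has a strictly smaller head side.
    obtain ⟨⟨u, v⟩, ⟨huv, hPuv⟩, hmin⟩ :=
      Set.exists_min_image _ (fun d => (G.edgeSide d.1 d.2).ncard) (Set.toFinite _) hD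
    refine ⟨v, fun z hvz hPvz => ?_⟩
    have hzu : z ≠ u := by
      rintro rfl
      exact hP z v huv hPuv hPvz
    exact (Set.ncard_lt_ncard (hG.edgeSide_ssubset huv hvz hzu)).not_ge
      (hmin (v, z) ⟨hvz, hPvz⟩)
  · obtain ⟨v⟩ := ‹Nonempty V›
    exact ⟨v, fun z hvz hPvz => hD ⟨(v, z), hvz, hPvz⟩⟩

theorem Preconnected.exists_adj_reachable_delAt (hG : G.Preconnected) {x : V} (hxv : x ≠ v) :
    ∃ u, G.Adj v u ∧ (delAt G v).Reachable u x := by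
  obtain ⟨p, hp⟩ := hG.exists_isPath v x
  cases p with
  | nil => exact absurd rfl hxv
  | cons h q => exact ⟨_, h, reach_delAt G v q ((Walk.cons_isPath_iff h q).1 hp).2⟩

theorem IsTree.ncard_sdiff_le_mul_ncard_components [Finite V] (hG : G.IsTree) (X : Set V)
    (v : V) (m : ℕ) (hm : ∀ z, G.Adj v z → (X ∩ G.edgeSide v z).ncard ≤ m) :
    (X \ {v}).ncard ≤ m * {c : (delAt G v).ConnectedComponent |
      ∃ x ∈ X, x ≠ v ∧ (delAt G v).connectedComponentMk x = c}.ncard := by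
  have himage : {c : (delAt G v).ConnectedComponent |
      ∃ x ∈ X, x ≠ v ∧ (delAt G v).connectedComponentMk x = c} =
      (delAt G v).connectedComponentMk '' (X \ {v}) := by
    ext c
    simp [and_assoc]
  rw [himage]
  refine Set.ncard_le_mul_ncard_image (Set.toFinite _) m ?_
  rintro _ ⟨x, ⟨-, hxv⟩, rfl⟩
  obtain ⟨u, hvu, hux⟩ := hG.connected.preconnected.exists_adj_reachable_delAt hxv
  refine (Set.ncard_le_ncard (fun y hy => ?_) (Set.toFinite _)).trans (hm u hvu)
  obtain ⟨⟨hyX, -⟩, hyx⟩ := hy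
  rw [hG.isAcyclic.edgeSide_eq hvu]
  exact ⟨hyX, hux.trans (ConnectedComponent.eq.1 hyx).symm⟩

end SimpleGraph

open Multigraph in
/-- in a tree with at least two vertices and `|X| ≥ kr`, either some
vertex has at least `k` components of its deletion meeting `X`, or some edge has at
least `r` vertices of `X` in each component of its deletion. -/
theorem tree_partition_lemma (τ : Type) [Finite τ] (tree : SimpleGraph τ)
    (ht : tree.IsTree) (hcard : 2 ≤ Nat.card τ) (X : Set τ) (k r : ℕ)
    (hk : 1 ≤ k) (hr : 1 ≤ r) (hX : k * r ≤ X.ncard) :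
    (∃ v : τ, k ≤ {c : (delAt tree v).ConnectedComponent |
        ∃ x ∈ X, x ≠ v ∧ (delAt tree v).connectedComponentMk x = c}.ncard) ∨
    (∃ u v : τ, tree.Adj u v ∧
      r ≤ (X ∩ {s | (tree.deleteEdges {s(u, v)}).Reachable u s}).ncard ∧
      r ≤ (X ∩ {s | (tree.deleteEdges {s(u, v)}).Reachable v s}).ncard) := by
  rcases Nat.lt_or_ge k 2 with hk1 | hk2
  · obtain rfl : k = 1 := by omega
    have : Nontrivial τ := Finite.one_lt_card_iff_nontrivial.1 hcard
    obtain ⟨x, hx⟩ : X.Nonempty := Set.nonempty_of_ncard_ne_zero (by omega)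
    obtain ⟨v, hv⟩ := exists_ne x
    exact .inl ⟨v, Nat.one_le_iff_ne_zero.2 <|
      Set.ncard_ne_zero_of_mem ⟨x, hx, hv.symm, rfl⟩⟩
  refine or_iff_not_imp_right.2 fun hedge => ?_
  push Not at hedge
  have : Nonempty τ := ht.connected.nonempty
  obtain ⟨v, hv⟩ := ht.isAcyclic.exists_sink (fun u v => r ≤ (X ∩ tree.edgeSide u v).ncard)
    fun u v huv hPuv hPvu =>
      (hedge u v huv (by rwa [SimpleGraph.edgeSide_swap] at hPvu)).not_ge hPuv
  have hcount := ht.ncard_sdiff_le_mul_ncard_components X v (r - 1)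
    fun z hvz => Nat.le_pred_of_lt (not_le.1 (hv z hvz))
  have hsdiff := Set.pred_ncard_le_ncard_sdiff_singleton X v
  refine ⟨v, by_contra fun hfew => ?_⟩
  obtain ⟨r, rfl⟩ : ∃ r', r = r' + 1 := ⟨r - 1, by omega⟩
  simp only [Nat.add_sub_cancel, not_le] at hcount hfew
  have := Nat.mul_le_mul_left r (Nat.succ_le_of_lt hfew)
  rw [Nat.mul_succ] at this
  rw [Nat.mul_succ, Nat.mul_comm] at hX
  omega
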